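/- f(λ) → 0 as λ → ∞, where f(λ) = λ · Σ_{x=0}^∞ log((x+1/2)/λ) · e^{-λ}λ^x/x!. -/

import Mathlib

noncomputable def f (lam : ℝ) : ℝ :=
  lam * ∑' x : ℕ, Real.log (((x : ℝ) + 1 / 2) / lam) * Real.exp (-lam) * lam ^ x / (Nat.factorial x : ℝ)

open Real Filter Nat

set_option maxHeartbeats 4000000


lemma tsum_exp' (l : ℝ) : ∑' n : ℕ, l ^ n / (n ! : ℝ) = Real.exp l := by
  rw [Real.exp_eq_exp_ℝ, NormedSpace.exp_eq_tsum_div]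

lemma step' {f g : ℕ → ℝ} (c : ℝ) (hf : Summable f) (h0 : g 0 = 0)
    (hs : ∀ n, g (n + 1) = c * f n) :
    Summable g ∧ ∑' n, g n = c * ∑' n, f n := by
  have hg1 : (fun n => g (n + 1)) = fun n => c * f n := funext hs
  have hshift : Summable (fun n => g (n + 1)) := by rw [hg1]; exact hf.mul_left c
  have hsg : Summable g := (summable_nat_add_iff 1).mp hshift
  refine ⟨hsg, ?_⟩
  rw [Summable.tsum_eq_zero_add hsg, h0, hg1, tsum_mul_left, zero_add]

lemma m1 (l : ℝ) : Summable (fun x : ℕ => (x : ℝ) * l ^ x / (x ! : ℝ)) ∧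
    ∑' x : ℕ, (x : ℝ) * l ^ x / (x ! : ℝ) = l * Real.exp l := by
  have h := step' (f := fun x : ℕ => l ^ x / (x ! : ℝ))
    (g := fun x : ℕ => (x : ℝ) * l ^ x / (x ! : ℝ)) l (Real.summable_pow_div_factorial l)
    (by simp) (fun n => by
      have h0 : ((n ! : ℝ)) ≠ 0 := by positivity
      simp only [Nat.factorial_succ]
      push_cast
      field_simp
      ring)
  rw [tsum_exp'] at h
  exact h

lemma m2 (l : ℝ) : Summable (fun x : ℕ => (x : ℝ) * ((x : ℝ) - 1) * l ^ x / (x ! : ℝ)) ∧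
    ∑' x : ℕ, (x : ℝ) * ((x : ℝ) - 1) * l ^ x / (x ! : ℝ) = l ^ 2 * Real.exp l := by
  have h := step' (f := fun x : ℕ => (x : ℝ) * l ^ x / (x ! : ℝ))
    (g := fun x : ℕ => (x : ℝ) * ((x : ℝ) - 1) * l ^ x / (x ! : ℝ)) l (m1 l).1
    (by simp) (fun n => by
      have h0 : ((n ! : ℝ)) ≠ 0 := by positivity
      simp only [Nat.factorial_succ]
      push_cast
      field_simp
      ring)
  rw [(m1 l).2] at h
  exact ⟨h.1, by rw [h.2]; ring⟩

lemma m3 (l : ℝ) :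
    Summable (fun x : ℕ => (x : ℝ) * ((x : ℝ) - 1) * ((x : ℝ) - 2) * l ^ x / (x ! : ℝ)) ∧
    ∑' x : ℕ, (x : ℝ) * ((x : ℝ) - 1) * ((x : ℝ) - 2) * l ^ x / (x ! : ℝ)
      = l ^ 3 * Real.exp l := by
  have h := step' (f := fun x : ℕ => (x : ℝ) * ((x : ℝ) - 1) * l ^ x / (x ! : ℝ))
    (g := fun x : ℕ => (x : ℝ) * ((x : ℝ) - 1) * ((x : ℝ) - 2) * l ^ x / (x ! : ℝ)) l (m2 l).1
    (by simp) (fun n => by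
      have h0 : ((n ! : ℝ)) ≠ 0 := by positivity
      simp only [Nat.factorial_succ]
      push_cast
      field_simp
      ring)
  rw [(m2 l).2] at h
  exact ⟨h.1, by rw [h.2]; ring⟩

lemma m4 (l : ℝ) :
    Summable (fun x : ℕ =>
      (x : ℝ) * ((x : ℝ) - 1) * ((x : ℝ) - 2) * ((x : ℝ) - 3) * l ^ x / (x ! : ℝ)) ∧
    ∑' x : ℕ, (x : ℝ) * ((x : ℝ) - 1) * ((x : ℝ) - 2) * ((x : ℝ) - 3) * l ^ x / (x ! : ℝ)
      = l ^ 4 * Real.exp l := by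
  have h := step' (f := fun x : ℕ => (x : ℝ) * ((x : ℝ) - 1) * ((x : ℝ) - 2) * l ^ x / (x ! : ℝ))
    (g := fun x : ℕ =>
      (x : ℝ) * ((x : ℝ) - 1) * ((x : ℝ) - 2) * ((x : ℝ) - 3) * l ^ x / (x ! : ℝ)) l (m3 l).1
    (by simp) (fun n => by
      have h0 : ((n ! : ℝ)) ≠ 0 := by positivity
      simp only [Nat.factorial_succ]
      push_cast
      field_simp
      ring)
  rw [(m3 l).2] at h
  exact ⟨h.1, by rw [h.2]; ring⟩

lemma poly_sum (l a0 a1 a2 a3 a4 : ℝ) :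
    Summable (fun x : ℕ =>
      (a0 + a1 * x + a2 * (x : ℝ) ^ 2 + a3 * (x : ℝ) ^ 3 + a4 * (x : ℝ) ^ 4) * l ^ x / (x ! : ℝ)) ∧
    ∑' x : ℕ, (a0 + a1 * x + a2 * (x : ℝ) ^ 2 + a3 * (x : ℝ) ^ 3 + a4 * (x : ℝ) ^ 4)
        * l ^ x / (x ! : ℝ)
      = (a0 + a1 * l + a2 * (l ^ 2 + l) + a3 * (l ^ 3 + 3 * l ^ 2 + l)
          + a4 * (l ^ 4 + 6 * l ^ 3 + 7 * l ^ 2 + l)) * Real.exp l := by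
  have hfe : (fun x : ℕ =>
      (a0 + a1 * x + a2 * (x : ℝ) ^ 2 + a3 * (x : ℝ) ^ 3 + a4 * (x : ℝ) ^ 4) * l ^ x / (x ! : ℝ))
      = fun x : ℕ =>
        a0 * (l ^ x / (x ! : ℝ))
        + (a1 + a2 + a3 + a4) * ((x : ℝ) * l ^ x / (x ! : ℝ))
        + (a2 + 3 * a3 + 7 * a4) * ((x : ℝ) * ((x : ℝ) - 1) * l ^ x / (x ! : ℝ))
        + (a3 + 6 * a4) * ((x : ℝ) * ((x : ℝ) - 1) * ((x : ℝ) - 2) * l ^ x / (x ! : ℝ))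
        + a4 * ((x : ℝ) * ((x : ℝ) - 1) * ((x : ℝ) - 2) * ((x : ℝ) - 3) * l ^ x / (x ! : ℝ)) := by
    funext x
    field_simp
    ring
  have s0 : Summable (fun x : ℕ => a0 * (l ^ x / (x ! : ℝ))) :=
    (Real.summable_pow_div_factorial l).mul_left a0
  have s1 := ((m1 l).1.mul_left (a1 + a2 + a3 + a4))
  have s2 := ((m2 l).1.mul_left (a2 + 3 * a3 + 7 * a4))
  have s3 := ((m3 l).1.mul_left (a3 + 6 * a4))
  have s4 := ((m4 l).1.mul_left a4)
  have hsum : Summable (fun x : ℕ =>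
      (a0 + a1 * x + a2 * (x : ℝ) ^ 2 + a3 * (x : ℝ) ^ 3 + a4 * (x : ℝ) ^ 4) * l ^ x / (x ! : ℝ)) := by
    rw [hfe]
    exact (((s0.add s1).add s2).add s3).add s4
  refine ⟨hsum, ?_⟩
  rw [hfe]
  rw [Summable.tsum_add (((s0.add s1).add s2).add s3) s4, Summable.tsum_add ((s0.add s1).add s2) s3,
    Summable.tsum_add (s0.add s1) s2, Summable.tsum_add s0 s1, tsum_mul_left, tsum_mul_left, tsum_mul_left,
    tsum_mul_left, tsum_mul_left, tsum_exp', (m1 l).2, (m2 l).2, (m3 l).2, (m4 l).2]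
  ring

lemma log_quad_bound (l t : ℝ) (hl : 1 ≤ l) (ht : 1/(2*l) ≤ t) :
    |Real.log t - ((t-1) - (t-1)^2/2)|
      ≤ (t-1)^2 / Real.sqrt l + (Real.sqrt l + 48 + 16 * Real.log (2*l)) * (t-1)^4 := by
  have hl0 : (0:ℝ) < l := by linarith
  have ht0 : 0 < t := lt_of_lt_of_le (by positivity) ht
  have hs0 : 0 < Real.sqrt l := Real.sqrt_pos.mpr hl0
  have hs1 : 1 ≤ Real.sqrt l := by
    rw [show (1:ℝ) = Real.sqrt 1 by simp]; exact Real.sqrt_le_sqrt hl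
  have hss : Real.sqrt l * Real.sqrt l = l := Real.mul_self_sqrt hl0.le
  have hlog2l : 0 ≤ Real.log (2*l) := Real.log_nonneg (by linarith)
  obtain ⟨u, rfl⟩ : ∃ u : ℝ, t = u + 1 := ⟨t - 1, by ring⟩
  rw [show u + 1 - 1 = u by ring]
  have htu : (0:ℝ) < u + 1 := ht0
  by_cases hcase : 1/2 ≤ u + 1
  · -- main case
    have hmain : |Real.log (u+1) - (u - u^2/2)| ≤ 2 * |u|^3 := by
      by_cases hsmall : |u| ≤ 1/2
      · have habs : |1 - (u+1)| < 1 := by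
          rw [show (1:ℝ) - (u+1) = -u by ring, abs_neg]
          exact lt_of_le_of_lt hsmall (by norm_num)
        have h := Real.abs_log_sub_add_sum_range_le habs 2
        simp only [Finset.sum_range_succ, Finset.sum_range_zero] at h
        rw [show (1:ℝ) - (1 - (u+1)) = u + 1 by ring,
          show (1:ℝ) - (u+1) = -u by ring] at h
        have heq : (0 + (-u)^(0+1)/(((0:ℕ):ℝ)+1) + (-u)^(1+1)/(((1:ℕ):ℝ)+1)) + Real.log (u+1)
            = Real.log (u+1) - (u - u^2/2) := by push_cast; ring
        rw [heq, abs_neg] at h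
        refine h.trans ?_
        have hd : (1:ℝ)/2 ≤ 1 - |u| := by linarith
        have hdd := div_le_div_of_nonneg_left
          (by positivity : (0:ℝ) ≤ |u|^(2+1)) (by norm_num : (0:ℝ) < 1/2) hd
        calc |u|^(2+1)/(1-|u|) ≤ |u|^(2+1)/(1/2) := hdd
          _ = 2 * |u|^3 := by ring
      · have hu : 1/2 < u := by
          rcases abs_cases u with ⟨h1, _⟩ | ⟨h1, h2⟩
          · linarith [not_le.mp hsmall]
          · exfalso; linarith [not_le.mp hsmall]
        have hup : Real.log (u+1) ≤ u := by
          have := Real.log_le_sub_one_of_pos htu; linarith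
        have hlow : u ≤ (u+1) * Real.log (u+1) := by
          have h2 : Real.log (u+1)⁻¹ ≤ (u+1)⁻¹ - 1 := Real.log_le_sub_one_of_pos (by positivity)
          rw [Real.log_inv] at h2
          have h3 : (u+1) * (-Real.log (u+1)) ≤ (u+1) * ((u+1)⁻¹ - 1) :=
            mul_le_mul_of_nonneg_left h2 htu.le
          have h4 : (u+1) * ((u+1)⁻¹ - 1) = 1 - (u+1) := by field_simp
          nlinarith
        rw [abs_of_pos (by linarith : (0:ℝ) < u), abs_le]
        constructor
        · nlinarith [hlow, hu]
        · nlinarith [hup, hu]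
    refine hmain.trans ?_
    have habs3 : |u|^3 = u^2 * |u| := by rw [pow_succ, sq_abs]
    have hcube : 2 * |u|^3 ≤ u^2 / Real.sqrt l + Real.sqrt l * u^4 := by
      rw [div_add' _ _ _ (ne_of_gt hs0), le_div_iff₀ hs0]
      nlinarith [sq_nonneg (|u| - Real.sqrt l * u^2), sq_abs u, habs3, hss, abs_nonneg u]
    have hextra : 0 ≤ (48 + 16 * Real.log (2*l)) * u^4 := by positivity
    have hdist : (Real.sqrt l + 48 + 16 * Real.log (2*l)) * u^4
        = Real.sqrt l * u^4 + (48 + 16 * Real.log (2*l)) * u^4 := by ring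
    rw [hdist]
    linarith [hcube, hextra]
  · -- t < 1/2
    have hu2 : u < -(1/2) := by linarith [not_le.mp hcase]
    have hu1 : -1 < u := by linarith
    have hu2' : 1/4 ≤ u^2 := by nlinarith
    have hu4 : 1/16 ≤ u^4 := by nlinarith
    have hup : Real.log (u+1) ≤ u := by
      have := Real.log_le_sub_one_of_pos htu; linarith
    have hlogt : -Real.log (2*l) ≤ Real.log (u+1) := by
      have hh : Real.log (1/(2*l)) ≤ Real.log (u+1) := Real.log_le_log (by positivity) ht
      rwa [one_div, Real.log_inv] at hh
    have hx : 0 ≤ Real.log (2*l) * (16*u^4 - 1) := mul_nonneg hlog2l (by nlinarith)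
    have h16 : Real.log (2*l) ≤ 16 * Real.log (2*l) * u^4 := by nlinarith [hx]
    have h48 : (3:ℝ) ≤ 48 * u^4 := by nlinarith
    have hsu4 : 0 ≤ Real.sqrt l * u^4 := by positivity
    have hu2s : 0 ≤ u^2 / Real.sqrt l := by positivity
    have hdist : (Real.sqrt l + 48 + 16 * Real.log (2*l)) * u^4
        = Real.sqrt l * u^4 + 48 * u^4 + 16 * Real.log (2*l) * u^4 := by ring
    have h16L0 : 0 ≤ 16 * Real.log (2*l) * u^4 := by positivity
    have hu1' : u^2 ≤ 1 := by nlinarith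
    rw [abs_le, hdist]
    constructor
    · linarith
    · linarith

lemma f_bound (l : ℝ) (hl : 1 ≤ l) : |f l| ≤ 1000 / Real.sqrt l := by
  have hl0 : (0:ℝ) < l := by linarith
  have hlne : l ≠ 0 := ne_of_gt hl0
  have hs0 : 0 < Real.sqrt l := Real.sqrt_pos.mpr hl0
  have hsne : Real.sqrt l ≠ 0 := ne_of_gt hs0
  have hs1 : 1 ≤ Real.sqrt l := by
    rw [show (1:ℝ) = Real.sqrt 1 by simp]; exact Real.sqrt_le_sqrt hl
  have hss : Real.sqrt l * Real.sqrt l = l := Real.mul_self_sqrt hl0.le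
  set K : ℝ := Real.sqrt l + 48 + 16 * Real.log (2*l) with hK_def
  -- the Q sum
  have hQ0 := poly_sum l ((1/2 - l)/l - (1/2 - l)^2/(2*l^2)) (1/l - (1/2 - l)/l^2)
    (-(1/(2*l^2))) 0 0
  have hQe : (fun x : ℕ =>
      (((1/2 - l)/l - (1/2 - l)^2/(2*l^2)) + (1/l - (1/2 - l)/l^2) * x
        + (-(1/(2*l^2))) * (x:ℝ)^2 + 0 * (x:ℝ)^3 + 0 * (x:ℝ)^4) * l ^ x / (x ! : ℝ))
      = fun x : ℕ =>
        ((((x:ℝ)+1/2)/l - 1) - (((x:ℝ)+1/2)/l - 1)^2/2) * (l ^ x / (x ! : ℝ)) := by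
    funext x
    have hfne : ((x ! : ℝ)) ≠ 0 := by positivity
    field_simp
    ring
  have hQval : ((1/2 - l)/l - (1/2 - l)^2/(2*l^2)) + (1/l - (1/2 - l)/l^2) * l
      + (-(1/(2*l^2))) * (l^2+l) + 0 * (l^3+3*l^2+l) + 0 * (l^4+6*l^3+7*l^2+l)
      = -(1/(8*l^2)) := by field_simp; ring
  rw [hQe, hQval] at hQ0
  -- the U2 sum
  have hU20 := poly_sum l ((1/2 - l)^2/l^2) (2*(1/2 - l)/l^2) (1/l^2) 0 0
  have hU2e : (fun x : ℕ =>
      ((1/2 - l)^2/l^2 + (2*(1/2 - l)/l^2) * x + (1/l^2) * (x:ℝ)^2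
        + 0 * (x:ℝ)^3 + 0 * (x:ℝ)^4) * l ^ x / (x ! : ℝ))
      = fun x : ℕ => (((x:ℝ)+1/2)/l - 1)^2 * (l ^ x / (x ! : ℝ)) := by
    funext x
    have hfne : ((x ! : ℝ)) ≠ 0 := by positivity
    field_simp
    ring
  have hU2val : (1/2 - l)^2/l^2 + (2*(1/2 - l)/l^2) * l + (1/l^2) * (l^2+l)
      + 0 * (l^3+3*l^2+l) + 0 * (l^4+6*l^3+7*l^2+l) = (l + 1/4)/l^2 := by
    field_simp; ring
  rw [hU2e, hU2val] at hU20
  -- the U4 sum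
  have hU40 := poly_sum l ((1/2 - l)^4/l^4) (4*(1/2 - l)^3/l^4) (6*(1/2 - l)^2/l^4)
    (4*(1/2 - l)/l^4) (1/l^4)
  have hU4e : (fun x : ℕ =>
      ((1/2 - l)^4/l^4 + (4*(1/2 - l)^3/l^4) * x + (6*(1/2 - l)^2/l^4) * (x:ℝ)^2
        + (4*(1/2 - l)/l^4) * (x:ℝ)^3 + (1/l^4) * (x:ℝ)^4) * l ^ x / (x ! : ℝ))
      = fun x : ℕ => (((x:ℝ)+1/2)/l - 1)^4 * (l ^ x / (x ! : ℝ)) := by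
    funext x
    have hfne : ((x ! : ℝ)) ≠ 0 := by positivity
    field_simp
    ring
  have hU4val : (1/2 - l)^4/l^4 + (4*(1/2 - l)^3/l^4) * l + (6*(1/2 - l)^2/l^4) * (l^2+l)
      + (4*(1/2 - l)/l^4) * (l^3+3*l^2+l) + (1/l^4) * (l^4+6*l^3+7*l^2+l)
      = (3*l^2 + (9/2)*l + 1/16)/l^4 := by
    field_simp; ring
  rw [hU4e, hU4val] at hU40
  -- summability of G
  have hbase : Summable (fun x : ℕ => l ^ x / (x ! : ℝ)) := Real.summable_pow_div_factorial l
  have hG : Summable (fun x : ℕ => Real.log (((x:ℝ)+1/2)/l) * (l ^ x / (x ! : ℝ))) := by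
    apply Summable.of_norm_bounded
      (g := fun x : ℕ => (1 + |Real.log l|) * (l ^ x / (x ! : ℝ)) + (x:ℝ) * l ^ x / (x ! : ℝ))
    · exact (hbase.mul_left _).add (m1 l).1
    · intro x
      have hxp : (0:ℝ) < (x:ℝ) + 1/2 := by positivity
      have hbp : (0:ℝ) ≤ l ^ x / (x ! : ℝ) := by positivity
      rw [Real.norm_eq_abs, abs_mul, abs_of_nonneg hbp]
      have hlog : |Real.log (((x:ℝ)+1/2)/l)| ≤ (x:ℝ) + 1 + |Real.log l| := by
        rw [Real.log_div (ne_of_gt hxp) hlne]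
        refine (abs_sub _ _).trans ?_
        have h1 : |Real.log ((x:ℝ)+1/2)| ≤ (x:ℝ) + 1 := by
          rw [abs_le]
          constructor
          · have hmono : Real.log (1/2) ≤ Real.log ((x:ℝ)+1/2) :=
              Real.log_le_log (by norm_num) (by have := Nat.cast_nonneg (α := ℝ) x; linarith)
            have h2 : Real.log (1/2) = -Real.log 2 := by rw [one_div, Real.log_inv]
            have h3 : Real.log 2 ≤ 1 := by
              have := Real.log_le_sub_one_of_pos (by norm_num : (0:ℝ) < 2); linarith
            have hx0 : (0:ℝ) ≤ (x:ℝ) := Nat.cast_nonneg x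
            linarith
          · have := Real.log_le_sub_one_of_pos hxp
            linarith
        linarith [abs_sub_abs_le_abs_sub (Real.log ((x:ℝ)+1/2)) (Real.log l)]
      calc |Real.log (((x:ℝ)+1/2)/l)| * (l ^ x / (x ! : ℝ))
          ≤ ((x:ℝ) + 1 + |Real.log l|) * (l ^ x / (x ! : ℝ)) :=
            mul_le_mul_of_nonneg_right hlog hbp
        _ = (1 + |Real.log l|) * (l ^ x / (x ! : ℝ)) + (x:ℝ) * l ^ x / (x ! : ℝ) := by ring
  -- pointwise bound
  have hpt : ∀ x : ℕ,
      |Real.log (((x:ℝ)+1/2)/l) * (l ^ x / (x ! : ℝ))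
        - ((((x:ℝ)+1/2)/l - 1) - (((x:ℝ)+1/2)/l - 1)^2/2) * (l ^ x / (x ! : ℝ))|
      ≤ (1/Real.sqrt l) * ((((x:ℝ)+1/2)/l - 1)^2 * (l ^ x / (x ! : ℝ)))
        + K * ((((x:ℝ)+1/2)/l - 1)^4 * (l ^ x / (x ! : ℝ))) := by
    intro x
    have hbp : (0:ℝ) ≤ l ^ x / (x ! : ℝ) := by positivity
    have ht : 1/(2*l) ≤ ((x:ℝ)+1/2)/l := by
      rw [div_le_div_iff₀ (by positivity) hl0]
      have hx0 : (0:ℝ) ≤ (x:ℝ) := Nat.cast_nonneg x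
      nlinarith
    have h := log_quad_bound l (((x:ℝ)+1/2)/l) hl ht
    have h2 := mul_le_mul_of_nonneg_right h hbp
    calc |Real.log (((x:ℝ)+1/2)/l) * (l ^ x / (x ! : ℝ))
        - ((((x:ℝ)+1/2)/l - 1) - (((x:ℝ)+1/2)/l - 1)^2/2) * (l ^ x / (x ! : ℝ))|
        = |Real.log (((x:ℝ)+1/2)/l)
            - ((((x:ℝ)+1/2)/l - 1) - (((x:ℝ)+1/2)/l - 1)^2/2)| * (l ^ x / (x ! : ℝ)) := by
          rw [show Real.log (((x:ℝ)+1/2)/l) * (l ^ x / (x ! : ℝ))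
              - ((((x:ℝ)+1/2)/l - 1) - (((x:ℝ)+1/2)/l - 1)^2/2) * (l ^ x / (x ! : ℝ))
              = (Real.log (((x:ℝ)+1/2)/l)
                - ((((x:ℝ)+1/2)/l - 1) - (((x:ℝ)+1/2)/l - 1)^2/2)) * (l ^ x / (x ! : ℝ))
            from by ring, abs_mul, abs_of_nonneg hbp]
      _ ≤ ((((x:ℝ)+1/2)/l - 1)^2 / Real.sqrt l
            + K * (((x:ℝ)+1/2)/l - 1)^4) * (l ^ x / (x ! : ℝ)) := h2
      _ = (1/Real.sqrt l) * ((((x:ℝ)+1/2)/l - 1)^2 * (l ^ x / (x ! : ℝ)))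
            + K * ((((x:ℝ)+1/2)/l - 1)^4 * (l ^ x / (x ! : ℝ))) := by ring
  -- assemble tsum bound
  have hRHSsum : Summable (fun x : ℕ =>
      (1/Real.sqrt l) * ((((x:ℝ)+1/2)/l - 1)^2 * (l ^ x / (x ! : ℝ)))
        + K * ((((x:ℝ)+1/2)/l - 1)^4 * (l ^ x / (x ! : ℝ)))) :=
    (hU20.1.mul_left _).add (hU40.1.mul_left _)
  have hGQ : Summable (fun x : ℕ =>
      Real.log (((x:ℝ)+1/2)/l) * (l ^ x / (x ! : ℝ))
        - ((((x:ℝ)+1/2)/l - 1) - (((x:ℝ)+1/2)/l - 1)^2/2) * (l ^ x / (x ! : ℝ))) :=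
    hG.sub hQ0.1
  have habs1 : |∑' x : ℕ, (Real.log (((x:ℝ)+1/2)/l) * (l ^ x / (x ! : ℝ))
      - ((((x:ℝ)+1/2)/l - 1) - (((x:ℝ)+1/2)/l - 1)^2/2) * (l ^ x / (x ! : ℝ)))|
      ≤ (1/Real.sqrt l) * ((l + 1/4)/l^2 * Real.exp l)
        + K * ((3*l^2 + (9/2)*l + 1/16)/l^4 * Real.exp l) := by
    have h1 : |∑' x : ℕ, (Real.log (((x:ℝ)+1/2)/l) * (l ^ x / (x ! : ℝ))
        - ((((x:ℝ)+1/2)/l - 1) - (((x:ℝ)+1/2)/l - 1)^2/2) * (l ^ x / (x ! : ℝ)))|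
        ≤ ∑' x : ℕ, |Real.log (((x:ℝ)+1/2)/l) * (l ^ x / (x ! : ℝ))
          - ((((x:ℝ)+1/2)/l - 1) - (((x:ℝ)+1/2)/l - 1)^2/2) * (l ^ x / (x ! : ℝ))| := by
      have := norm_tsum_le_tsum_norm (f := fun x : ℕ =>
        Real.log (((x:ℝ)+1/2)/l) * (l ^ x / (x ! : ℝ))
          - ((((x:ℝ)+1/2)/l - 1) - (((x:ℝ)+1/2)/l - 1)^2/2) * (l ^ x / (x ! : ℝ)))
        (by simpa [Real.norm_eq_abs] using hGQ.abs)
      simpa [Real.norm_eq_abs] using this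
    refine h1.trans ?_
    have h2 := Summable.tsum_le_tsum hpt hGQ.abs hRHSsum
    refine h2.trans ?_
    rw [Summable.tsum_add (hU20.1.mul_left _) (hU40.1.mul_left _), tsum_mul_left, tsum_mul_left,
      hU20.2, hU40.2]
  rw [Summable.tsum_sub hG hQ0.1, hQ0.2] at habs1
  -- rewrite f l
  have hfe : f l = l * (Real.exp (-l) *
      ∑' x : ℕ, Real.log (((x:ℝ)+1/2)/l) * (l ^ x / (x ! : ℝ))) := by
    rw [f]
    congr 1
    rw [← tsum_mul_left]
    apply tsum_congr
    intro x
    ring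
  set SG := ∑' x : ℕ, Real.log (((x:ℝ)+1/2)/l) * (l ^ x / (x ! : ℝ)) with hSG_def
  -- bound |SG|
  have hexp : |(-(1/(8*l^2)) * Real.exp l)| = (1/(8*l^2)) * Real.exp l := by
    rw [abs_mul, abs_neg, abs_of_nonneg (by positivity : (0:ℝ) ≤ 1/(8*l^2)),
      abs_of_nonneg (Real.exp_nonneg l)]
  have hSGb : |SG| ≤ (1/Real.sqrt l) * ((l + 1/4)/l^2 * Real.exp l)
      + K * ((3*l^2 + (9/2)*l + 1/16)/l^4 * Real.exp l) + 1/(8*l^2) * Real.exp l := by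
    have h4 := abs_sub_abs_le_abs_sub SG (-(1/(8*l^2)) * Real.exp l)
    rw [hexp] at h4
    linarith [habs1]
  -- |f l| bound
  have hfabs : |f l| ≤ l * (Real.exp (-l) * ((1/Real.sqrt l) * ((l + 1/4)/l^2 * Real.exp l)
      + K * ((3*l^2 + (9/2)*l + 1/16)/l^4 * Real.exp l) + 1/(8*l^2) * Real.exp l)) := by
    rw [hfe, abs_mul, abs_mul, abs_of_pos hl0, abs_of_pos (Real.exp_pos (-l))]
    exact mul_le_mul_of_nonneg_left
      (mul_le_mul_of_nonneg_left hSGb (Real.exp_pos (-l)).le) hl0.le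
  have hsimp : l * (Real.exp (-l) * ((1/Real.sqrt l) * ((l + 1/4)/l^2 * Real.exp l)
      + K * ((3*l^2 + (9/2)*l + 1/16)/l^4 * Real.exp l) + 1/(8*l^2) * Real.exp l))
      = l * ((1/Real.sqrt l) * ((l + 1/4)/l^2)
        + K * ((3*l^2 + (9/2)*l + 1/16)/l^4) + 1/(8*l^2)) := by
    rw [Real.exp_neg]
    have hE : Real.exp l ≠ 0 := ne_of_gt (Real.exp_pos l)
    field_simp
  rw [hsimp] at hfabs
  refine hfabs.trans ?_
  -- final numeric inequality
  have hsl : Real.sqrt l ≤ l := by nlinarith [hss, hs1]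
  have hlog4 : Real.log (2*l) ≤ 4 * Real.sqrt l := by
    have h2l : (0:ℝ) < 2*l := by linarith
    have hsq : Real.log (Real.sqrt (2*l)) = Real.log (2*l) / 2 := Real.log_sqrt h2l.le
    have hle : Real.log (Real.sqrt (2*l)) ≤ Real.sqrt (2*l) - 1 :=
      Real.log_le_sub_one_of_pos (Real.sqrt_pos.mpr h2l)
    have hs2l : Real.sqrt (2*l) ≤ 2 * Real.sqrt l := by
      rw [show 2 * Real.sqrt l = Real.sqrt 4 * Real.sqrt l from by
        rw [show (4:ℝ) = 2^2 by norm_num, Real.sqrt_sq (by norm_num : (0:ℝ) ≤ 2)],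
        ← Real.sqrt_mul (by norm_num : (0:ℝ) ≤ 4)]
      exact Real.sqrt_le_sqrt (by linarith)
    linarith
  have hK : K ≤ 113 * Real.sqrt l := by
    rw [hK_def]
    linarith [hlog4, hs1]
  have hKpos : 0 ≤ K := by
    rw [hK_def]
    have := Real.log_nonneg (show (1:ℝ) ≤ 2*l by linarith)
    linarith
  have hX1 : (1/Real.sqrt l) * ((l + 1/4)/l^2) ≤ (5/4)/(Real.sqrt l * l) := by
    have e1 : (1/Real.sqrt l) * ((l + 1/4)/l^2) = (l + 1/4)/(Real.sqrt l * l^2) := by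
      field_simp
    rw [e1]
    have e2 : (5/4)/(Real.sqrt l * l) = ((5/4)*l)/(Real.sqrt l * l^2) := by
      rw [div_eq_div_iff (by positivity) (by positivity)]
      ring
    rw [e2]
    gcongr
    linarith
  have hX2 : K * ((3*l^2 + (9/2)*l + 1/16)/l^4) ≤ 904/(Real.sqrt l * l) := by
    have h1 : K * ((3*l^2 + (9/2)*l + 1/16)/l^4)
        ≤ (113 * Real.sqrt l) * ((8*l^2)/l^4) := by
      gcongr
      nlinarith
    refine h1.trans ?_
    have e3 : (113 * Real.sqrt l) * ((8*l^2)/l^4) = 904 * Real.sqrt l / l^2 := by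
      field_simp
      ring
    rw [e3, div_le_div_iff₀ (by positivity) (by positivity)]
    apply le_of_eq
    linear_combination (904*l) * hss
  have hX3 : 1/(8*l^2) ≤ 1/(Real.sqrt l * l) := by
    apply one_div_le_one_div_of_le (by positivity)
    nlinarith [hsl, hl0]
  have hsum : (1/Real.sqrt l) * ((l + 1/4)/l^2)
      + K * ((3*l^2 + (9/2)*l + 1/16)/l^4) + 1/(8*l^2)
      ≤ 1000/(Real.sqrt l * l) := by
    have : (5/4)/(Real.sqrt l * l) + 904/(Real.sqrt l * l) + 1/(Real.sqrt l * l)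
        ≤ 1000/(Real.sqrt l * l) := by
      rw [← add_div, ← add_div]
      gcongr
      norm_num
    linarith [hX1, hX2, hX3]
  calc l * ((1/Real.sqrt l) * ((l + 1/4)/l^2)
        + K * ((3*l^2 + (9/2)*l + 1/16)/l^4) + 1/(8*l^2))
      ≤ l * (1000/(Real.sqrt l * l)) := mul_le_mul_of_nonneg_left hsum hl0.le
    _ = 1000 / Real.sqrt l := by
        field_simp

theorem stmt_8 : Filter.Tendsto f Filter.atTop (nhds 0) := by
  have hsqrt : Tendsto Real.sqrt atTop atTop := by
    apply tendsto_atTop_atTop.mpr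
    intro b
    exact ⟨b^2, fun x hx => by
      calc b ≤ |b| := le_abs_self b
        _ = Real.sqrt (b^2) := (Real.sqrt_sq_eq_abs b).symm
        _ ≤ Real.sqrt x := Real.sqrt_le_sqrt hx⟩
  apply squeeze_zero_norm' (a := fun l : ℝ => 1000 / Real.sqrt l)
  · filter_upwards [eventually_ge_atTop (1:ℝ)] with l hl
    simpa [Real.norm_eq_abs] using f_bound l hl
  · exact tendsto_const_nhds.div_atTop hsqrt
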